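/- Let q ∈ MvPolynomial (Fin n) (ZMod 2) be a quadratic form and let r ∈ ℕ. Then the rank of the polar matrix of q is at most 2r if and only if there exist linear forms a_i, b_i for i < r and a linear form c such that q = (Σ_{i<r} a_i·b_i) + c². (Classification of quadratic forms over F₂ by the rank of the associated bilinear form: the rank filtration subfunctor S^{2,2r} of the functor V ↦ S²(V♯) is generated by the single quadratic form u₁v₁ + ⋯ + u_r v_r + w².) -/

import Mathlib

/-!
The polar matrix of a quadratic form over `F₂` is alternating, and an alternating matrix of
rank at most `2r` is a sum of `r` matrices `u vᵀ - v uᵀ`: if `P j k ≠ 0`, subtracting the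
rank-two alternating matrix with the same `j`-th and `k`-th columns as `P` clears rows and
columns `j, k` and lowers the rank by two. Since `u vᵀ - v uᵀ` is the polar matrix of the
product of the linear forms of `u` and `v`, this writes `q` as `∑ aᵢ bᵢ` plus a quadratic form
with zero polar matrix, i.e. a sum `∑ dᵢ xᵢ²`, which over `F₂` is the square `(∑ dᵢ xᵢ)²`.
Conversely the polar matrix of `∑ aᵢ bᵢ + c²` is a sum of `2r` rank-one matrices.
-/

open MvPolynomial

/-- The polar matrix of a quadratic form over `F₂`: off-diagonal entry `(j,k)` is the
coefficient of `x_j x_k`, and the diagonal is zero. -/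
noncomputable def polarMatrix {n : ℕ} (q : MvPolynomial (Fin n) (ZMod 2)) :
    Matrix (Fin n) (Fin n) (ZMod 2) :=
  Matrix.of fun j k =>
    if j = k then 0 else q.coeff (Finsupp.single j 1 + Finsupp.single k 1)

theorem Finsupp.exists_eq_single_add_single_of_degree_eq_two {σ : Type*} {d : σ →₀ ℕ}
    (h : d.degree = 2) : ∃ i j, d = single i 1 + single j 1 := by
  classical
  have hcard : Multiset.card (toMultiset d) = 2 := by
    rw [card_toMultiset, ← h, degree_apply]; rfl
  obtain ⟨i, j, hij⟩ := Multiset.card_eq_two.mp hcard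
  refine ⟨i, j, toMultiset_eq_iff.mp hij |>.trans ?_⟩
  rw [Multiset.insert_eq_cons, ← Multiset.singleton_add, Multiset.toFinsupp_add,
    Multiset.toFinsupp_singleton, Multiset.toFinsupp_singleton]

namespace MvPolynomial

variable {σ R : Type*} [CommSemiring R]

theorem IsHomogeneous.eq_zero_of_forall_coeff_single_add_single {q : MvPolynomial σ R}
    (hq : q.IsHomogeneous 2)
    (h : ∀ i j, q.coeff (Finsupp.single i 1 + Finsupp.single j 1) = 0) : q = 0 := by
  ext d
  by_contra hd
  obtain ⟨i, j, rfl⟩ := Finsupp.exists_eq_single_add_single_of_degree_eq_two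
    (hq.degree_eq_sum_deg_support (mem_support_iff.mpr hd)).symm
  exact hd (h i j)

variable [Fintype σ]

noncomputable def linearForm (u : σ → R) : MvPolynomial σ R := ∑ i, u i • X i

theorem isHomogeneous_one_iff_exists_linearForm {c : MvPolynomial σ R} :
    c.IsHomogeneous 1 ↔ ∃ u, linearForm u = c := by
  rw [← mem_homogeneousSubmodule, homogeneousSubmodule_one_eq_span_X,
    Submodule.mem_span_range_iff_exists_fun]
  rfl

theorem isHomogeneous_linearForm (u : σ → R) : (linearForm u).IsHomogeneous 1 :=
  isHomogeneous_one_iff_exists_linearForm.mpr ⟨u, rfl⟩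

theorem pderiv_linearForm [DecidableEq σ] (u : σ → R) (i : σ) :
    pderiv i (linearForm u) = C (u i) := by
  simp [linearForm, map_sum, pderiv_X, Pi.single_apply, smul_eq_C_mul]

theorem coeff_single_two_linearForm_sq [CharP R 2] (u : σ → R) (i : σ) :
    (linearForm u ^ 2).coeff (Finsupp.single i 2) = u i ^ 2 := by
  classical
  simp [linearForm, sum_pow_char, smul_pow, X_pow_eq_monomial, coeff_sum, coeff_monomial,
    Finsupp.single_left_inj]

end MvPolynomial

namespace Matrix

section RankBound

variable {m n R ι : Type*} [Fintype n] [Fintype ι]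

theorem rank_sum_vecMulVec_le [CommSemiring R] [StrongRankCondition R]
    (x : ι → m → R) (y : ι → n → R) :
    (∑ i, vecMulVec (x i) (y i)).rank ≤ Fintype.card ι := by
  have h : ∑ i, vecMulVec (x i) (y i) = (of x)ᵀ * of y := by
    ext a b; simp [mul_apply, vecMulVec_apply, sum_apply]
  rw [h]
  exact (rank_mul_le_left _ _).trans (rank_le_card_width _)

theorem rank_sum_vecMulVec_sub_vecMulVec_le [CommRing R] [StrongRankCondition R]
    (u v : ι → n → R) :
    (∑ i, (vecMulVec (u i) (v i) - vecMulVec (v i) (u i))).rank ≤ 2 * Fintype.card ι := by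
  have h : ∑ i, (vecMulVec (u i) (v i) - vecMulVec (v i) (u i)) =
      ∑ s, vecMulVec (Sum.elim u v s) (Sum.elim v (-u) s) := by
    simp [Fintype.sum_sum_type, sub_eq_add_neg, Finset.sum_add_distrib, vecMulVec_neg]
  rw [h, two_mul, ← Fintype.card_sum]
  exact rank_sum_vecMulVec_le _ _

end RankBound

section Alternating

variable {n K : Type*} [Field K]

/-- For `P` alternating with `P j k ≠ 0`, this alternating matrix of rank two has the same
`j`-th and `k`-th columns as `P`. -/
noncomputable def hyperbolicPart (P : Matrix n n K) (j k : n) : Matrix n n K :=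
  vecMulVec ((P j k)⁻¹ • P.col j) (P.col k) - vecMulVec (P.col k) ((P j k)⁻¹ • P.col j)

theorem transpose_sub_hyperbolicPart {P : Matrix n n K} (hP : Pᵀ = -P) (j k : n) :
    (P - hyperbolicPart P j k)ᵀ = -(P - hyperbolicPart P j k) := by
  ext a b
  have hab : P b a = -P a b := congrFun (congrFun hP a) b
  simp [hyperbolicPart, vecMulVec_apply, hab]
  ring

theorem sub_hyperbolicPart_apply_self {P : Matrix n n K} (hdiag : ∀ i, P i i = 0) (j k i : n) :
    (P - hyperbolicPart P j k) i i = 0 := by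
  simp [hyperbolicPart, vecMulVec_apply, hdiag]
  ring

theorem sub_hyperbolicPart_apply_left {P : Matrix n n K} (hP : Pᵀ = -P)
    (hdiag : ∀ i, P i i = 0) {j k : n} (hjk : P j k ≠ 0) (i : n) :
    (P - hyperbolicPart P j k) j i = 0 := by
  have hij : P i j = -P j i := congrFun (congrFun hP j) i
  simp [hyperbolicPart, vecMulVec_apply, hdiag, hij]
  field_simp
  ring

theorem sub_hyperbolicPart_apply_right {P : Matrix n n K} (hP : Pᵀ = -P)
    (hdiag : ∀ i, P i i = 0) {j k : n} (hjk : P j k ≠ 0) (i : n) :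
    (P - hyperbolicPart P j k) k i = 0 := by
  have hkj : P k j = -P j k := congrFun (congrFun hP j) k
  have hik : P i k = -P k i := congrFun (congrFun hP k) i
  simp [hyperbolicPart, vecMulVec_apply, hdiag, hkj, hik]
  field_simp
  ring

theorem col_sub_hyperbolicPart (P : Matrix n n K) (j k i : n) :
    (P - hyperbolicPart P j k).col i =
      P.col i - (P i k * (P j k)⁻¹) • P.col j + ((P j k)⁻¹ * P i j) • P.col k := by
  ext a
  simp [hyperbolicPart, vecMulVec_apply]
  ring

open Submodule in
theorem rank_sub_hyperbolicPart_add_two_le [Fintype n] {P : Matrix n n K} (hP : Pᵀ = -P)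
    (hdiag : ∀ i, P i i = 0) {j k : n} (hjk : P j k ≠ 0) :
    (P - hyperbolicPart P j k).rank + 2 ≤ P.rank := by
  have hkj : P k j = -P j k := congrFun (congrFun hP j) k
  have hpair : ∀ s t : K, (s • P.col j + t • P.col k) j = 0 →
      (s • P.col j + t • P.col k) k = 0 → s = 0 ∧ t = 0 := by
    intro s t hj hk
    simp [hdiag, hkj, hjk] at hj hk
    exact ⟨hk, hj⟩
  set W := span K (Set.range P.col)
  set U := span K (Set.range (P - hyperbolicPart P j k).col)
  set T := span K (Set.range ![P.col j, P.col k])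
  have hTW : T ≤ W := span_le.mpr <| Set.range_subset_iff.mpr <| Fin.forall_fin_two.mpr
    ⟨subset_span ⟨j, rfl⟩, subset_span ⟨k, rfl⟩⟩
  have hUW : U ≤ W := by
    refine span_le.mpr <| Set.range_subset_iff.mpr fun i => ?_
    rw [col_sub_hyperbolicPart]
    exact add_mem (sub_mem (subset_span ⟨i, rfl⟩) (smul_mem _ _ (subset_span ⟨j, rfl⟩)))
      (smul_mem _ _ (subset_span ⟨k, rfl⟩))
  have hUT : U ⊓ T = ⊥ := by
    have hU : U ≤ LinearMap.ker (LinearMap.proj j) ⊓ LinearMap.ker (LinearMap.proj k) :=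
      span_le.mpr <| Set.range_subset_iff.mpr fun i =>
        ⟨sub_hyperbolicPart_apply_left hP hdiag hjk i,
          sub_hyperbolicPart_apply_right hP hdiag hjk i⟩
    refine eq_bot_iff.mpr fun y ⟨hyU, hyT⟩ => ?_
    obtain ⟨c, rfl⟩ := (mem_span_range_iff_exists_fun K).mp hyT
    obtain ⟨hyj, hyk⟩ := hU hyU
    rw [Fin.sum_univ_two] at hyj hyk ⊢
    obtain ⟨h0, h1⟩ := hpair _ _ hyj hyk
    simp [h0, h1]
  have hT : Module.finrank K T = 2 := by
    refine (finrank_span_eq_card (LinearIndependent.pair_iff.mpr fun s t hst => ?_)).trans rfl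
    exact hpair s t (by rw [hst]; rfl) (by rw [hst]; rfl)
  rw [rank_eq_finrank_span_cols, rank_eq_finrank_span_cols]
  calc Module.finrank K U + 2 = Module.finrank K ↥(U ⊔ T) := by
        rw [← hT, ← finrank_sup_add_finrank_inf_eq, hUT, finrank_bot, add_zero]
    _ ≤ Module.finrank K W := finrank_mono (sup_le hUW hTW)

theorem eq_zero_of_rank_lt_two [Fintype n] {P : Matrix n n K} (hP : Pᵀ = -P)
    (hdiag : ∀ i, P i i = 0) (hr : P.rank < 2) : P = 0 := by
  by_contra hP0
  obtain ⟨j, hj⟩ := Function.ne_iff.mp hP0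
  obtain ⟨k, hjk⟩ := Function.ne_iff.mp hj
  have := rank_sub_hyperbolicPart_add_two_le hP hdiag hjk
  omega

theorem exists_eq_sum_vecMulVec_sub_vecMulVec_of_rank_le [Fintype n] {r : ℕ} {P : Matrix n n K}
    (hP : Pᵀ = -P) (hdiag : ∀ i, P i i = 0) (hr : P.rank ≤ 2 * r) :
    ∃ u v : Fin r → n → K, P = ∑ i, (vecMulVec (u i) (v i) - vecMulVec (v i) (u i)) := by
  induction r generalizing P with
  | zero => exact ⟨0, 0, by simp [eq_zero_of_rank_lt_two hP hdiag (by omega)]⟩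
  | succ r ih =>
    obtain rfl | hP0 := eq_or_ne P 0
    · exact ⟨0, 0, by simp⟩
    obtain ⟨j, hj⟩ := Function.ne_iff.mp hP0
    obtain ⟨k, hjk⟩ := Function.ne_iff.mp hj
    obtain ⟨u, v, huv⟩ := ih (transpose_sub_hyperbolicPart hP j k)
      (sub_hyperbolicPart_apply_self hdiag j k)
      (by have := rank_sub_hyperbolicPart_add_two_le hP hdiag hjk; omega)
    refine ⟨Fin.snoc u ((P j k)⁻¹ • P.col j), Fin.snoc v (P.col k), ?_⟩
    rw [Fin.sum_univ_castSucc]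
    simp only [Fin.snoc_castSucc, Fin.snoc_last, ← huv, hyperbolicPart]
    abel

end Alternating

end Matrix

open Matrix

section PolarMatrix

variable {n : ℕ}

theorem polarMatrix_apply_of_ne (q : MvPolynomial (Fin n) (ZMod 2)) {j k : Fin n} (hjk : j ≠ k) :
    polarMatrix q j k = q.coeff (Finsupp.single j 1 + Finsupp.single k 1) :=
  if_neg hjk

theorem polarMatrix_apply_self (q : MvPolynomial (Fin n) (ZMod 2)) (j : Fin n) :
    polarMatrix q j j = 0 :=
  if_pos rfl

theorem transpose_polarMatrix (q : MvPolynomial (Fin n) (ZMod 2)) :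
    (polarMatrix q)ᵀ = -polarMatrix q := by
  ext j k
  rw [transpose_apply, neg_apply, CharTwo.neg_eq]
  simp only [polarMatrix, of_apply, eq_comm (a := k), add_comm]

theorem polarMatrix_apply_eq_coeff_pderiv (q : MvPolynomial (Fin n) (ZMod 2)) (j k : Fin n) :
    polarMatrix q j k = (pderiv j (pderiv k q)).coeff 0 := by
  rw [coeff_pderiv, coeff_pderiv, zero_add]
  by_cases hjk : j = k
  · subst hjk
    -- differentiating `x_j²` twice produces the factor `2 = 0`
    simp [polarMatrix, CharTwo.add_self_eq_zero]
  · simp [polarMatrix, hjk]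

theorem polarMatrix_add (p q : MvPolynomial (Fin n) (ZMod 2)) :
    polarMatrix (p + q) = polarMatrix p + polarMatrix q := by
  ext j k; simp [polarMatrix_apply_eq_coeff_pderiv]

theorem polarMatrix_sub (p q : MvPolynomial (Fin n) (ZMod 2)) :
    polarMatrix (p - q) = polarMatrix p - polarMatrix q := by
  ext j k; simp [polarMatrix_apply_eq_coeff_pderiv]

theorem polarMatrix_sum {ι : Type*} (s : Finset ι) (f : ι → MvPolynomial (Fin n) (ZMod 2)) :
    polarMatrix (∑ i ∈ s, f i) = ∑ i ∈ s, polarMatrix (f i) := by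
  ext j k; simp [polarMatrix_apply_eq_coeff_pderiv, Matrix.sum_apply, coeff_sum]

theorem polarMatrix_linearForm_mul (u v : Fin n → ZMod 2) :
    polarMatrix (linearForm u * linearForm v) = vecMulVec u v - vecMulVec v u := by
  ext j k
  simp [polarMatrix_apply_eq_coeff_pderiv, pderiv_linearForm, vecMulVec_apply, CharTwo.sub_eq_add]
  ring

theorem polarMatrix_linearForm_sq (u : Fin n → ZMod 2) : polarMatrix (linearForm u ^ 2) = 0 := by
  rw [sq, polarMatrix_linearForm_mul, sub_self]

theorem exists_eq_linearForm_sq_of_polarMatrix_eq_zero {q : MvPolynomial (Fin n) (ZMod 2)}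
    (hq : q.IsHomogeneous 2) (h : polarMatrix q = 0) : ∃ w, q = linearForm w ^ 2 := by
  refine ⟨fun i => q.coeff (Finsupp.single i 2), sub_eq_zero.mp ?_⟩
  refine (hq.sub ((isHomogeneous_linearForm _).pow 2)).eq_zero_of_forall_coeff_single_add_single
    fun i j => ?_
  rcases eq_or_ne i j with rfl | hij
  · rw [← Finsupp.single_add, coeff_sub, coeff_single_two_linearForm_sq, ZMod.pow_card, sub_self]
  · rw [← polarMatrix_apply_of_ne _ hij, polarMatrix_sub, h, polarMatrix_linearForm_sq, sub_zero,
      Matrix.zero_apply]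

end PolarMatrix

theorem rank_filtration_of_quadratic_forms {n : ℕ}
    (q : MvPolynomial (Fin n) (ZMod 2)) (hq : q.IsHomogeneous 2) (r : ℕ) :
    (polarMatrix q).rank ≤ 2 * r ↔
      ∃ (a b : Fin r → MvPolynomial (Fin n) (ZMod 2))
        (c : MvPolynomial (Fin n) (ZMod 2)),
        (∀ i, (a i).IsHomogeneous 1) ∧ (∀ i, (b i).IsHomogeneous 1) ∧
          c.IsHomogeneous 1 ∧ q = (∑ i, a i * b i) + c ^ 2 := by
  constructor
  · intro hr
    obtain ⟨u, v, huv⟩ := exists_eq_sum_vecMulVec_sub_vecMulVec_of_rank_le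
      (transpose_polarMatrix q) (polarMatrix_apply_self q) hr
    set S := ∑ i, linearForm (u i) * linearForm (v i)
    have hS : S.IsHomogeneous 2 := IsHomogeneous.sum _ _ _ fun i _ =>
      (isHomogeneous_linearForm _).mul (isHomogeneous_linearForm _)
    have hpolar : polarMatrix (q - S) = 0 := by
      simp only [S, polarMatrix_sub, polarMatrix_sum, polarMatrix_linearForm_mul, huv, sub_self]
    obtain ⟨w, hw⟩ := exists_eq_linearForm_sq_of_polarMatrix_eq_zero (hq.sub hS) hpolar
    refine ⟨fun i => linearForm (u i), fun i => linearForm (v i), linearForm w,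
      fun i => isHomogeneous_linearForm _, fun i => isHomogeneous_linearForm _,
      isHomogeneous_linearForm _, ?_⟩
    rw [← hw, add_sub_cancel]
  · rintro ⟨a, b, c, ha, hb, hc, rfl⟩
    choose u hu using fun i => isHomogeneous_one_iff_exists_linearForm.mp (ha i)
    choose v hv using fun i => isHomogeneous_one_iff_exists_linearForm.mp (hb i)
    obtain ⟨w, rfl⟩ := isHomogeneous_one_iff_exists_linearForm.mp hc
    simp only [← hu, ← hv, polarMatrix_add, polarMatrix_sum, polarMatrix_linearForm_mul,
      polarMatrix_linearForm_sq, add_zero]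
    simpa using rank_sum_vecMulVec_sub_vecMulVec_le u v
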